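/- Under the ball-constraint assumption, the dual (DSDP) is strictly feasible: there exists α ∈ ℝ^K with α_k > 0 for all k ∈ K such that the matrix C + Σ_{k∈K} α_k A_k is positive definite. (Such an α can be built by taking α_k = 1 for every non-ball constraint k, setting C' = C + Σ_{non-ball k} A_k, and taking α_i = μ for the n ball constraints with μ ≥ 1 + max(0, −λ_min(C')), using that the ball-constraint matrices sum to the identity matrix of size 2n.) -/

import Mathlib

open Matrix

noncomputable section

/-- Index of the real part of the voltage at node `i` among the `2n` coordinates. -/
def idx1 (n : ℕ) (i : Fin n) : Fin (2 * n) := ⟨i.val, by have := i.isLt; omega⟩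

/-- Index of the imaginary part of the voltage at node `i` among the `2n` coordinates. -/
def idx2 (n : ℕ) (i : Fin n) : Fin (2 * n) := ⟨i.val + n, by have := i.isLt; omega⟩

/-- The matrix of the ball constraint at node `i`: diagonal, with ones exactly in
positions `(i,i)` and `(i+n, i+n)`. -/
def ballMat (n : ℕ) (i : Fin n) : Matrix (Fin (2 * n)) (Fin (2 * n)) ℝ :=
  Matrix.diagonal (fun j => if j = idx1 n i ∨ j = idx2 n i then 1 else 0)

/-!
Take `α_k = 1` off the ball constraints and `α_k = 1 + μ` on them. The ball matrices sum to the
identity, so `C + Σ_k α_k A_k = (C + Σ_k A_k) + μ • 1`; the spectrum of the symmetric matrix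
`C + Σ_k A_k` is finite, hence bounded below, and any shift `μ` beyond it makes the sum positive
definite.
-/

open Filter

theorem Matrix.IsHermitian.eventually_posDef_add_smul_one {m : Type*} [Fintype m]
    [DecidableEq m] {M : Matrix m m ℝ} (hM : M.IsHermitian) :
    ∀ᶠ μ : ℝ in atTop, (M + μ • 1).PosDef := by
  obtain ⟨c, hc⟩ := M.finite_real_spectrum.bddBelow
  filter_upwards [eventually_gt_atTop (1 - c)] with μ hμ
  have hshift : (M + (μ - 1) • 1).PosSemidef := by
    refine posSemidef_iff_isHermitian_and_spectrum_nonneg.2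
      ⟨hM.add (isHermitian_one.smul (IsSelfAdjoint.all _)), ?_⟩
    rintro x hx
    rw [← Algebra.algebraMap_eq_smul_one, ← spectrum.add_singleton_eq] at hx
    obtain ⟨y, hy, _, rfl, rfl⟩ := hx
    have := hc hy
    simp only [Set.mem_ofPred_eq]
    linarith
  convert PosDef.posSemidef_add hshift PosDef.one using 1
  module

def node {n : ℕ} (j : Fin (2 * n)) : Fin n :=
  if h : j.val < n then ⟨j.val, h⟩ else ⟨j.val - n, by omega⟩

theorem eq_idx1_or_eq_idx2_iff {n : ℕ} (j : Fin (2 * n)) (i : Fin n) :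
    j = idx1 n i ∨ j = idx2 n i ↔ i = node j := by
  simp only [idx1, idx2, node, Fin.ext_iff, apply_dite Fin.val]
  split_ifs <;> omega

theorem sum_ballMat (n : ℕ) : ∑ i : Fin n, ballMat n i = 1 := by
  ext j l
  simp [Matrix.sum_apply, ballMat, diagonal_apply, one_apply, eq_idx1_or_eq_idx2_iff]

theorem stmt_1_general {n : ℕ} {K : Type} [Fintype K]
    (C : Matrix (Fin (2 * n)) (Fin (2 * n)) ℝ) (hC : C.IsSymm)
    (A : K → Matrix (Fin (2 * n)) (Fin (2 * n)) ℝ) (hA : ∀ k, (A k).IsSymm)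
    (e : Fin n → K) (he : Function.Injective e)
    (hball : ∀ i : Fin n, A (e i) = ballMat n i) :
    ∃ α : K → ℝ, (∀ k, 0 < α k) ∧ (C + ∑ k, α k • A k).PosDef := by
  classical
  have hM : (C + ∑ k, A k).IsHermitian :=
    (isHermitian_iff_isSymm.2 hC).add <|
      isSelfAdjoint_sum _ fun k _ => isHermitian_iff_isSymm.2 (hA k)
  obtain ⟨μ, hμ, hμ0⟩ :=
    (hM.eventually_posDef_add_smul_one.and (eventually_ge_atTop 0)).exists
  set ball := Finset.univ.map ⟨e, he⟩
  have hsum : ∑ k, (if k ∈ ball then μ else 0) • A k = μ • 1 := by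
    simp_rw [ite_smul, zero_smul, Finset.sum_ite_mem, Finset.univ_inter, ball, Finset.sum_map]
    simp [hball, ← Finset.smul_sum, sum_ballMat]
  refine ⟨fun k => 1 + if k ∈ ball then μ else 0, fun k => by positivity, ?_⟩
  simp_rw [add_smul, one_smul, Finset.sum_add_distrib, hsum, ← add_assoc]
  exact hμ

/-- under the ball-constraint assumption, the dual (DSDP) is strictly feasible:
there is `α` with all entries positive such that `C + Σ_k α_k A_k` is positive definite. -/
theorem stmt_1 {n : ℕ} (hn : 0 < n) {K : Type} [Fintype K]
    (C : Matrix (Fin (2 * n)) (Fin (2 * n)) ℝ) (hC : C.IsSymm)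
    (A : K → Matrix (Fin (2 * n)) (Fin (2 * n)) ℝ) (hA : ∀ k, (A k).IsSymm)
    (b : K → ℝ)
    (e : Fin n → K) (he : Function.Injective e)
    (V : Fin n → ℝ) (hV : ∀ i, 0 < V i)
    (hball : ∀ i : Fin n, A (e i) = ballMat n i)
    (hb : ∀ i : Fin n, b (e i) = (V i) ^ 2) :
    ∃ α : K → ℝ, (∀ k, 0 < α k) ∧ (C + ∑ k, α k • A k).PosDef :=
  stmt_1_general C hC A hA e he hball
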